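/- Let n ≥ 1, let c : Fin n → ℝ, let y : Fin n → ℝ satisfy y_i ≥ 0 for all i and Σ_i y_i = 1, and let 0 ≤ ε < 2. Let s be a permutation of Fin n with c_{s_1} ≤ ⋯ ≤ c_{s_n} and let ỹ be the greedy output of Algorithm 1. Then ỹ is feasible for the gradient redirection problem: ỹ_i ≥ 0 for all i, Σ_i ỹ_i = 1, and Σ_i |ỹ_i − y_i| ≤ ε. -/
import Mathlib

private lemma ggr_aux1 (a b : ℝ) : min a b = a - max 0 (a - b) := by
  simp only [min_def, max_def]; split_ifs <;> linarith

private lemma ggr_aux2 (a b : ℝ) (hb : 0 ≤ b) :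
    min b (max 0 a) = max 0 a - max 0 (a - b) := by
  simp only [min_def, max_def]; split_ifs <;> linarith

/-- **Feasibility of the greedy gradient redirection algorithm (Algorithm 1).**
The greedy output `ty` is feasible: nonnegative, sums to one, and within `ℓ¹`
distance `ε` of the clean posterior `y`. -/
theorem greedy_gradient_redirection_feasible
    (n : ℕ) (hn : 1 ≤ n) (c y : Fin n → ℝ)
    (hy0 : ∀ i, 0 ≤ y i) (hy1 : ∑ i, y i = 1)
    (ε : ℝ) (hε0 : 0 ≤ ε) (hε2 : ε < 2)
    (s : Equiv.Perm (Fin n))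
    (hs : Monotone (fun t => c (s t)))
    (ty : Fin n → ℝ)
    (hty_last : ty (s ⟨n - 1, by omega⟩) = min (y (s ⟨n - 1, by omega⟩) + ε / 2) 1)
    (hty : ∀ t : Fin n, t ≠ ⟨n - 1, by omega⟩ →
      ty (s t) = max 0 (y (s t) - max 0 (ε / 2 - ∑ j ∈ Finset.Iio t, y (s j)))) :
    (∀ i, 0 ≤ ty i) ∧ (∑ i, ty i = 1) ∧ (∑ i, |ty i - y i| ≤ ε) := by
  set d : ℝ := ε / 2 with hd
  set g : ℕ → ℝ := fun k => if h : k < n then y (s ⟨k, h⟩) else 0 with hgdef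
  set f : ℕ → ℝ := fun k => if h : k < n then ty (s ⟨k, h⟩) else 0 with hfdef
  set S : ℕ → ℝ := fun k => ∑ j ∈ Finset.range k, g j with hSdef
  set A : ℕ → ℝ := fun k => max 0 (d - S k) with hAdef
  have hg0 : ∀ k, 0 ≤ g k := by
    intro k; simp only [hgdef]; split
    · exact hy0 _
    · exact le_refl 0
  have hA0 : ∀ k, 0 ≤ A k := fun k => le_max_left _ _
  -- Iio sums over Fin correspond to range sums of g
  have hIio : ∀ t : Fin n, ∑ j ∈ Finset.Iio t, y (s j) = S t.val := by
    intro t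
    have h1 : ((Finset.Iio t).map Fin.valEmbedding) = Finset.Iio (t : ℕ) :=
      Fin.map_valEmbedding_Iio t
    have h2 : ∑ k ∈ (Finset.Iio t).map Fin.valEmbedding, g k
        = ∑ j ∈ Finset.Iio t, g j.val := Finset.sum_map _ _ _
    have h3 : ∀ j ∈ Finset.Iio t, g j.val = y (s j) := by
      intro j _; simp only [hgdef]; rw [dif_pos j.isLt]
    rw [Finset.sum_congr rfl h3] at h2
    rw [← h2, h1, hSdef]
    simp [← Nat.Iio_eq_range]
  -- description of f
  have hf_small : ∀ k, k < n - 1 → f k = max 0 (g k - A k) := by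
    intro k hk
    have hkn : k < n := by omega
    have hne : (⟨k, hkn⟩ : Fin n) ≠ ⟨n - 1, by omega⟩ := by
      simp [Fin.ext_iff]; omega
    have := hty ⟨k, hkn⟩ hne
    rw [hIio] at this
    simp only [hfdef, hgdef, hAdef, dif_pos hkn]
    exact this
  have hf_last : f (n - 1) = min (g (n - 1) + d) 1 := by
    have hkn : n - 1 < n := by omega
    simp only [hfdef, hgdef, dif_pos hkn]
    exact hty_last
  -- total sums
  have hgsum : ∑ k ∈ Finset.range n, g k = 1 := by
    rw [← Fin.sum_univ_eq_sum_range g n]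
    have : ∀ i : Fin n, g i.val = y (s i) := by
      intro i; simp only [hgdef]; rw [dif_pos i.isLt]
    rw [Finset.sum_congr rfl fun i _ => this i]
    rw [Equiv.sum_comp s y]; exact hy1
  have hSn : S n = 1 := hgsum
  have hSnn : ∀ k, 0 ≤ S k := fun k => Finset.sum_nonneg fun j _ => hg0 j
  -- telescoping: removed mass on first n-1 coordinates
  have hterm : ∀ k, k < n - 1 → g k - f k = A k - A (k + 1) := by
    intro k hk
    rw [hf_small k hk]
    have h1 : g k - max 0 (g k - A k) = min (g k) (A k) := by
      rcases le_total (g k) (A k) with h | h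
      · rw [max_eq_left (by linarith), min_eq_left h]; ring
      · rw [max_eq_right (by linarith), min_eq_right h]; ring
    rw [h1]
    have hS1 : S (k + 1) = S k + g k := Finset.sum_range_succ g k
    have h2 := ggr_aux2 (d - S k) (g k) (hg0 k)
    show g k ⊓ (0 ⊔ (d - S k)) = 0 ⊔ (d - S k) - 0 ⊔ (d - S (k + 1))
    rw [hS1, h2]
    ring_nf
  have htel : ∑ k ∈ Finset.range (n - 1), (g k - f k) = A 0 - A (n - 1) := by
    rw [Finset.sum_congr rfl fun k hk => hterm k (Finset.mem_range.mp hk)]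
    exact Finset.sum_range_sub' A (n - 1)
  have hA0val : A 0 = d := by
    simp only [hAdef, hSdef, Finset.range_zero, Finset.sum_empty, sub_zero]
    exact max_eq_right (by positivity)
  -- last coordinate gain
  have hSlast : S (n - 1) = 1 - g (n - 1) := by
    have : S n = S (n - 1) + g (n - 1) := by
      have : n = (n - 1) + 1 := by omega
      rw [this]; exact Finset.sum_range_succ g (n - 1)
    rw [hSn] at this; linarith
  have hlast : f (n - 1) - g (n - 1) = d - A (n - 1) := by
    rw [hf_last]
    have h1 : min (g (n - 1) + d) 1 - g (n - 1) = min d (1 - g (n - 1)) := by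
      rcases le_total (g (n - 1) + d) 1 with h | h
      · rw [min_eq_left h, min_eq_left (by linarith)]; ring
      · rw [min_eq_right h, min_eq_right (by linarith)]
    rw [h1, ← hSlast, ggr_aux1 d (S (n - 1)), hAdef]
  have hAle : A (n - 1) ≤ d := by
    have := hSnn (n - 1)
    simp only [hAdef]
    rcases le_total (d - S (n - 1)) 0 with h | h
    · rw [max_eq_left h]; positivity
    · rw [max_eq_right h]; linarith
  -- nonnegativity
  have hty0 : ∀ i, 0 ≤ ty i := by
    intro i
    set t := s.symm i with ht
    have hi : i = s t := by simp [ht]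
    rw [hi]
    by_cases h : t = (⟨n - 1, by omega⟩ : Fin n)
    · rw [h, hty_last]
      have : 0 ≤ y (s ⟨n - 1, by omega⟩) + ε / 2 := by
        have := hy0 (s ⟨n - 1, by omega⟩); linarith
      exact le_min this zero_le_one
    · rw [hty t h]; exact le_max_left _ _
  -- conversion of Fin sums to range sums
  have hconv : ∀ F : Fin n → ℝ, ∀ F' : ℕ → ℝ,
      (∀ i : Fin n, F' i.val = F (s i)) → ∑ i, F i = ∑ k ∈ Finset.range n, F' k := by
    intro F F' hF
    rw [← Equiv.sum_comp s F, ← Fin.sum_univ_eq_sum_range F' n]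
    exact (Finset.sum_congr rfl fun i _ => hF i).symm
  have hfsum : ∑ i, ty i = ∑ k ∈ Finset.range n, f k := by
    apply hconv; intro i; simp only [hfdef]; rw [dif_pos i.isLt]
  have hsplit : ∀ F : ℕ → ℝ, ∑ k ∈ Finset.range n, F k
      = ∑ k ∈ Finset.range (n - 1), F k + F (n - 1) := by
    intro F
    have : n = (n - 1) + 1 := by omega
    rw [this]; exact Finset.sum_range_succ F (n - 1)
  refine ⟨hty0, ?_, ?_⟩
  · -- sum = 1
    rw [hfsum, hsplit f]
    have h1 : ∑ k ∈ Finset.range (n - 1), f k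
        = ∑ k ∈ Finset.range (n - 1), g k - (A 0 - A (n - 1)) := by
      rw [← htel, Finset.sum_sub_distrib]; ring
    rw [h1, hA0val]
    have h2 : ∑ k ∈ Finset.range (n - 1), g k = 1 - g (n - 1) := by
      have := hsplit g; rw [hgsum] at this; linarith
    rw [h2]
    linarith [hlast]
  · -- ℓ¹ bound
    have habs : ∑ i, |ty i - y i| = ∑ k ∈ Finset.range n, |f k - g k| := by
      apply hconv; intro i
      simp only [hfdef, hgdef]; rw [dif_pos i.isLt, dif_pos i.isLt]
    rw [habs, hsplit fun k => |f k - g k|]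
    have h1 : ∀ k ∈ Finset.range (n - 1), |f k - g k| = g k - f k := by
      intro k hk
      have hk' := Finset.mem_range.mp hk
      rw [abs_sub_comm, abs_of_nonneg]
      rw [hf_small k hk']
      rcases le_total (g k - A k) 0 with h | h
      · rw [max_eq_left h]; have := hg0 k; linarith
      · rw [max_eq_right h]; have := hA0 k; linarith
    rw [Finset.sum_congr rfl h1, htel, hA0val]
    have h2 : |f (n - 1) - g (n - 1)| = d - A (n - 1) := by
      rw [hlast] at *
      rw [hlast, abs_of_nonneg (by linarith)]
    rw [h2]
    linarith [hA0 (n - 1)]
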